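/- For every a ≥ 0, x, y ∈ ℝ and b ∈ ℤ, the boundary Fourier kernel admits the closed integral form K(a, x, y, b) = (1/2π) ∫_{−π}^{π} e^{−i√a (x sin z − y cos z)} e^{i b z} dz. -/

import Mathlib

open Complex

/-- The alternate Vandermonde convolution `F_{ℓ₁,ℓ₂}(k)`. -/
def altVandermonde (ℓ₁ ℓ₂ : ℕ) (k : ℤ) : ℤ :=
  ∑ l₁ ∈ Finset.range (ℓ₁ + 1), ∑ l₂ ∈ Finset.range (ℓ₂ + 1),
    (-1) ^ (ℓ₂ - l₂) * (ℓ₁.choose l₁ : ℤ) * (ℓ₂.choose l₂ : ℤ) *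
      (if 2 * ((l₁ : ℤ) + l₂) = k + ℓ₁ + ℓ₂ then 1 else 0)

/-- The boundary Fourier kernel
`K(a,x,y,b) = ∑_{ℓ₁,ℓ₂} (a/4)^{(ℓ₁+ℓ₂)/2} F_{ℓ₁,ℓ₂}(b) (iy)^{ℓ₁} x^{ℓ₂}/(ℓ₁! ℓ₂!)`. -/
noncomputable def boundaryKernel (a x y : ℝ) (b : ℤ) : ℂ :=
  ∑' ℓ : ℕ × ℕ,
    (((a / 4) ^ (((ℓ.1 : ℝ) + ℓ.2) / 2) : ℝ) : ℂ) * (altVandermonde ℓ.1 ℓ.2 b : ℂ) *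
      (I * y) ^ ℓ.1 * (x : ℂ) ^ ℓ.2 / ((ℓ.1.factorial : ℂ) * ℓ.2.factorial)

/-!
Expand `exp (i√a y cos z) · exp (-i√a x sin z)` as a double exponential series; the series of sup
norms is summable, so it may be integrated term by term. With `u = e^{-iz}` one has
`2 cos z = u + u⁻¹` and `-2i sin z = u - u⁻¹`, so the binomial theorem writes
`cos^ℓ₁ z · (-i sin z)^ℓ₂` as a Laurent polynomial in `u` whose `u^b` coefficient is
`2^{-(ℓ₁+ℓ₂)} F_{ℓ₁,ℓ₂}(b)`; orthogonality of `e^{inz}` on `[-π, π]` extracts exactly this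
coefficient, and `(a/4)^{(ℓ₁+ℓ₂)/2} = (√a/2)^{ℓ₁+ℓ₂}` matches the remaining factors.
-/

open Finset MeasureTheory

theorem add_inv_pow_mul_sub_inv_pow {K : Type*} [Field K] {u : K} (hu : u ≠ 0) (ℓ₁ ℓ₂ : ℕ) :
    (u + u⁻¹) ^ ℓ₁ * (u - u⁻¹) ^ ℓ₂ =
      ∑ l₁ ∈ range (ℓ₁ + 1), ∑ l₂ ∈ range (ℓ₂ + 1),
        (-1) ^ (ℓ₂ - l₂) * (ℓ₁.choose l₁ : K) * (ℓ₂.choose l₂ : K) *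
          u ^ (2 * ((l₁ : ℤ) + l₂) - ℓ₁ - ℓ₂) := by
  rw [sub_eq_add_neg, add_pow, add_pow, sum_mul_sum]
  refine sum_congr rfl fun l₁ hl₁ => sum_congr rfl fun l₂ hl₂ => ?_
  have hexp : 2 * ((l₁ : ℤ) + l₂) - ℓ₁ - ℓ₂ = (l₁ + l₂ : ℕ) - ((ℓ₁ - l₁ + (ℓ₂ - l₂) : ℕ) : ℤ) := by
    have := mem_range_succ_iff.mp hl₁; have := mem_range_succ_iff.mp hl₂; omega
  rw [hexp, zpow_sub₀ hu, zpow_natCast, zpow_natCast, neg_pow, inv_pow]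
  ring

theorem integral_exp_int_mul_I (n : ℤ) :
    ∫ z in (-Real.pi)..Real.pi, exp (I * n * z) = if n = 0 then (2 * Real.pi : ℂ) else 0 := by
  split_ifs with h
  · simp only [h, Int.cast_zero, mul_zero, zero_mul, exp_zero, intervalIntegral.integral_const,
      sub_neg_eq_add, real_smul, ofReal_add, mul_one]
    ring
  · have hc : I * n ≠ 0 := mul_ne_zero I_ne_zero (Int.cast_ne_zero.mpr h)
    rw [integral_exp_mul_complex hc]
    have hshift : I * n * Real.pi = I * n * (-Real.pi : ℝ) + n * (2 * Real.pi * I) := by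
      push_cast; ring
    rw [hshift, exp_add, exp_int_mul_two_pi_mul_I, mul_one, sub_self, zero_div]

theorem two_mul_cos_eq_exp_neg_add_inv (z : ℂ) :
    2 * cos z = exp (-(z * I)) + (exp (-(z * I)))⁻¹ := by
  rw [two_cos, ← exp_neg, neg_neg, add_comm, neg_mul]

theorem two_mul_neg_I_mul_sin_eq_exp_neg_sub_inv (z : ℂ) :
    2 * -(I * sin z) = exp (-(z * I)) - (exp (-(z * I)))⁻¹ := by
  rw [← exp_neg, neg_neg, sin, neg_mul]
  linear_combination (exp (z * I) - exp (-(z * I))) * I_sq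

theorem cos_pow_mul_neg_I_mul_sin_pow_mul_exp_eq_sum (ℓ₁ ℓ₂ : ℕ) (b : ℤ) (z : ℝ) :
    (Real.cos z : ℂ) ^ ℓ₁ * (-(I * Real.sin z)) ^ ℓ₂ * exp (I * b * z) =
      (2 ^ (ℓ₁ + ℓ₂))⁻¹ * ∑ l₁ ∈ range (ℓ₁ + 1), ∑ l₂ ∈ range (ℓ₂ + 1),
        (-1) ^ (ℓ₂ - l₂) * (ℓ₁.choose l₁ : ℂ) * (ℓ₂.choose l₂ : ℂ) *
          exp (I * ↑(b - (2 * ((l₁ : ℤ) + l₂) - ℓ₁ - ℓ₂)) * z) := by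
  have hu : exp (-(z * I)) ≠ 0 := exp_ne_zero _
  have h2 : (2 : ℂ) ^ (ℓ₁ + ℓ₂) ≠ 0 := pow_ne_zero _ two_ne_zero
  rw [ofReal_cos, ofReal_sin, eq_inv_mul_iff_mul_eq₀ h2, pow_add, ← mul_assoc,
    mul_mul_mul_comm, ← mul_pow, ← mul_pow, two_mul_cos_eq_exp_neg_add_inv,
    two_mul_neg_I_mul_sin_eq_exp_neg_sub_inv, add_inv_pow_mul_sub_inv_pow hu, sum_mul]
  refine sum_congr rfl fun l₁ _ => ?_
  rw [sum_mul]
  refine sum_congr rfl fun l₂ _ => ?_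
  rw [← exp_int_mul, mul_assoc, ← exp_add]
  congr 2
  push_cast
  ring

theorem integral_cos_pow_mul_neg_I_mul_sin_pow_mul_exp (ℓ₁ ℓ₂ : ℕ) (b : ℤ) :
    ∫ z in (-Real.pi)..Real.pi, (Real.cos z : ℂ) ^ ℓ₁ * (-(I * Real.sin z)) ^ ℓ₂ * exp (I * b * z) =
      2 * Real.pi * altVandermonde ℓ₁ ℓ₂ b / 2 ^ (ℓ₁ + ℓ₂) := by
  have hint (c : ℂ) (n : ℤ) :
      IntervalIntegrable (fun z : ℝ => c * exp (I * n * z)) volume (-Real.pi) Real.pi :=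
    (continuous_const.mul (continuous_exp.comp (by fun_prop))).intervalIntegrable _ _
  simp_rw [cos_pow_mul_neg_I_mul_sin_pow_mul_exp_eq_sum, intervalIntegral.integral_const_mul]
  rw [intervalIntegral.integral_finsetSum fun l₁ _ =>
    (continuous_finsetSum _ fun l₂ _ => by fun_prop).intervalIntegrable _ _]
  simp_rw [intervalIntegral.integral_finsetSum fun l₂ _ => hint _ _,
    intervalIntegral.integral_const_mul, integral_exp_int_mul_I, altVandermonde]
  push_cast
  rw [mul_comm, div_eq_mul_inv, mul_sum]
  congr 1
  refine sum_congr rfl fun l₁ _ => ?_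
  rw [mul_sum]
  refine sum_congr rfl fun l₂ _ => ?_
  have hcond : b - (2 * ((l₁ : ℤ) + l₂) - ℓ₁ - ℓ₂) = 0 ↔ 2 * ((l₁ : ℤ) + l₂) = b + ℓ₁ + ℓ₂ := by
    omega
  simp only [hcond]
  split_ifs <;> ring

theorem hasSum_pow_div_factorial_exp (w : ℂ) :
    HasSum (fun n : ℕ => w ^ n / n.factorial) (exp w) := by
  simpa only [← exp_eq_exp_ℂ] using NormedSpace.expSeries_div_hasSum_exp w

theorem summable_norm_pow_div_factorial_mul (u v : ℂ) :
    Summable fun ℓ : ℕ × ℕ => ‖u ^ ℓ.1 / ℓ.1.factorial * (v ^ ℓ.2 / ℓ.2.factorial)‖ :=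
  ((NormedSpace.norm_expSeries_div_summable u).mul_norm
    (NormedSpace.norm_expSeries_div_summable v) :)

theorem hasSum_exp_mul_exp (u v : ℂ) :
    HasSum (fun ℓ : ℕ × ℕ => u ^ ℓ.1 / ℓ.1.factorial * (v ^ ℓ.2 / ℓ.2.factorial))
      (exp u * exp v) :=
  ((hasSum_pow_div_factorial_exp u).mul (hasSum_pow_div_factorial_exp v)
    (summable_norm_pow_div_factorial_mul u v).of_norm :)

theorem norm_cos_pow_mul_neg_I_mul_sin_pow_mul_exp_le_one (ℓ₁ ℓ₂ : ℕ) (b : ℤ) (z : ℝ) :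
    ‖(Real.cos z : ℂ) ^ ℓ₁ * (-(I * Real.sin z)) ^ ℓ₂ * exp (I * b * z)‖ ≤ 1 := by
  have hexp : ‖exp (I * b * z)‖ = 1 := by
    simpa only [ofReal_mul, ofReal_intCast, mul_assoc] using norm_exp_I_mul_ofReal (b * z)
  rw [norm_mul, norm_mul, hexp, mul_one, norm_pow, norm_pow, norm_neg, norm_mul, norm_I, one_mul,
    norm_real, norm_real]
  exact mul_le_one₀ (pow_le_one₀ (norm_nonneg _) (Real.abs_cos_le_one z)) (by positivity)
    (pow_le_one₀ (norm_nonneg _) (Real.abs_sin_le_one z))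

theorem hasSum_integral_exp_sin_cos_series (s x y : ℝ) (b : ℤ) :
    HasSum (fun ℓ : ℕ × ℕ => ∫ z in (-Real.pi)..Real.pi,
        (I * s * y) ^ ℓ.1 / ℓ.1.factorial * ((s * x) ^ ℓ.2 / ℓ.2.factorial) *
          ((Real.cos z : ℂ) ^ ℓ.1 * (-(I * Real.sin z)) ^ ℓ.2 * exp (I * b * z)))
      (∫ z in (-Real.pi)..Real.pi,
        exp (-(I * s * (x * Real.sin z - y * Real.cos z))) * exp (I * b * z)) := by
  set c : ℕ × ℕ → ℂ := fun ℓ => (I * s * y) ^ ℓ.1 / ℓ.1.factorial * ((s * x) ^ ℓ.2 / ℓ.2.factorial)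
  have hc : Summable fun ℓ => ‖c ℓ‖ := summable_norm_pow_div_factorial_mul _ _
  refine intervalIntegral.hasSum_integral_of_dominated_convergence (fun ℓ _ => ‖c ℓ‖)
    (fun ℓ => (by fun_prop : Continuous _).aestronglyMeasurable) (fun ℓ => .of_forall fun z _ => ?_)
    (.of_forall fun _ _ => hc) intervalIntegrable_const (.of_forall fun z _ => ?_)
  · rw [norm_mul]
    exact mul_le_of_le_one_right (norm_nonneg _)
      (norm_cos_pow_mul_neg_I_mul_sin_pow_mul_exp_le_one _ _ b z)
  · have h := (hasSum_exp_mul_exp (I * s * y * Real.cos z) (s * x * -(I * Real.sin z))).mul_right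
      (exp (I * b * z))
    rw [← exp_add, show I * s * y * Real.cos z + s * x * -(I * Real.sin z) =
      -(I * s * (x * Real.sin z - y * Real.cos z)) by ring] at h
    exact h.congr_fun fun ℓ => by simp only [mul_pow]; ring

theorem Real.div_four_rpow_add_div_two {a : ℝ} (ha : 0 ≤ a) (m n : ℕ) :
    (a / 4) ^ (((m : ℝ) + n) / 2) = (√a / 2) ^ (m + n) := by
  rw [Real.rpow_div_two_eq_sqrt _ (by positivity), Real.sqrt_div' _ (by norm_num : (0 : ℝ) ≤ 4),
    show √(4 : ℝ) = 2 by rw [show (4 : ℝ) = 2 ^ 2 by norm_num, Real.sqrt_sq zero_le_two]]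
  exact_mod_cast Real.rpow_natCast _ (m + n)

/-- Closed integral form:
`K(a,x,y,b) = (1/2π) ∫_{−π}^{π} e^{−i√a (x sin z − y cos z)} e^{ibz} dz`. -/
theorem boundaryKernel_integral_form (a : ℝ) (ha : 0 ≤ a) (x y : ℝ) (b : ℤ) :
    boundaryKernel a x y b =
      ((1 / (2 * Real.pi) : ℝ) : ℂ) *
        ∫ z in (-Real.pi)..Real.pi,
          Complex.exp (-(I * Real.sqrt a * (x * Real.sin z - y * Real.cos z))) *
            Complex.exp (I * b * z) := by
  have hterm (ℓ : ℕ × ℕ) :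
      ∫ z in (-Real.pi)..Real.pi,
        (I * √a * y) ^ ℓ.1 / ℓ.1.factorial * ((√a * x) ^ ℓ.2 / ℓ.2.factorial) *
          ((Real.cos z : ℂ) ^ ℓ.1 * (-(I * Real.sin z)) ^ ℓ.2 * exp (I * b * z)) =
        2 * Real.pi * ((((a / 4) ^ (((ℓ.1 : ℝ) + ℓ.2) / 2) : ℝ) : ℂ) *
          (altVandermonde ℓ.1 ℓ.2 b : ℂ) * (I * y) ^ ℓ.1 * (x : ℂ) ^ ℓ.2 /
            ((ℓ.1.factorial : ℂ) * ℓ.2.factorial)) := by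
    rw [intervalIntegral.integral_const_mul, integral_cos_pow_mul_neg_I_mul_sin_pow_mul_exp,
      Real.div_four_rpow_add_div_two ha]
    push_cast
    rw [div_pow, pow_add]
    field_simp
    ring
  have h2pi : (2 * Real.pi : ℂ) ≠ 0 := by exact_mod_cast Real.two_pi_pos.ne'
  have hsum := ((hasSum_integral_exp_sin_cos_series (√a) x y b).congr_fun
    fun ℓ => (hterm ℓ).symm).mul_left (2 * Real.pi : ℂ)⁻¹
  simp only [← mul_assoc, inv_mul_cancel₀ h2pi, one_mul] at hsum
  rw [boundaryKernel, hsum.tsum_eq]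
  push_cast
  ring
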